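/- arXiv:2407.01387 — 3 statements merged into one kernel-verified Lean document; each statement's English description precedes it below -/
import Mathlib

section
/- Let (f,α) and (g,β) be coherent labelled coloured configurations and let ε ∈ ℤ. Then in the ring ℚ(X)⟦Y⟧ of formal power series over the field of rational functions ℚ(X), the Hadamard product in Y satisfies W^ε_{f,α} *_Y W^ε_{g,β} = W^ε_{f⧢g, α∪β}. -/
/-!
For a single coloured permutation `a`, the coefficient of `Y ^ k` in `W^ε_{a,α}` is `α(a)` times
the sum of `X ^ (ε (v₁ + ⋯ + vₙ))` over the `a`-compatible sequences `0 ≤ v₁ ≤ ⋯ ≤ vₙ ≤ k`, i.e.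
those increasing strictly at the descents of `a` (Stanley's `P`-partition expansion). Given
compatible sequences for `a` and `b` with the same bound `k`, merge them by value, breaking ties
by the colour order, which is total on `a ++ b` as the symbols are distinct; this yields a unique
shuffle `c` of `a` and `b` with a compatible sequence for `c` of the same weight. So the product
of the `k`-th coefficients is the sum over `c ∈ a ⧢ b`, which is the Hadamard product, and
bilinearity extends the identity to configurations.
-/

open scoped Classical

noncomputable section

/-- A coloured permutation: a list of (symbol, colour) pairs. -/
abbrev CPerm : Type := List (ℕ × ℕ)

/-- `a` is a genuine coloured permutation: distinct, positive symbols. -/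
def IsCPerm (a : CPerm) : Prop :=
  (a.map Prod.fst).Nodup ∧ ∀ p ∈ a, 0 < p.1

/-- The colour order on coloured integers: `p < q` iff the colour of `p` is bigger
(as an integer), or the colours agree and the symbol of `p` is smaller. -/
def cLt (p q : ℕ × ℕ) : Prop :=
  q.2 < p.2 ∨ (p.2 = q.2 ∧ p.1 < q.1)

instance : DecidableRel cLt := fun p q => by unfold cLt; infer_instance

/-- The descent set of a coloured permutation (positions `0,…,n−1`; position `i ≥ 1`
is a descent iff the `(i+1)`-st entry is smaller than the `i`-th entry (1-indexed)
in the colour order; `0` is a descent iff the first colour is nonzero). -/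
def DesSet (a : CPerm) : Finset ℕ :=
  (Finset.range a.length).filter fun i =>
    if i = 0 then (a.getD 0 (0, 0)).2 ≠ 0
    else cLt (a.getD i (0, 0)) (a.getD (i - 1) (0, 0))

/-- Descent number. -/
def des (a : CPerm) : ℕ := (DesSet a).card

/-- Comajor index. -/
def comaj (a : CPerm) : ℕ := ∑ i ∈ DesSet a, (a.length - i)

/-- `colVec a j` is the number of entries of `a` of colour `j`. -/
def colVec (a : CPerm) (j : ℕ) : ℕ := (a.map Prod.snd).count j

/-- The multiset of shuffles of two lists. -/
def shuffles {α : Type*} : List α → List α → Multiset (List α)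
  | [], bs => {bs}
  | a :: as, [] => {a :: as}
  | a :: as, b :: bs =>
      ((shuffles as (b :: bs)).map (a :: ·)) + ((shuffles (a :: as) bs).map (b :: ·))
  termination_by as bs => as.length + bs.length

/-- The set of symbols of a coloured permutation. -/
def symbols (a : CPerm) : Finset ℕ := (a.map Prod.fst).toFinset

/-- The set of nonzero colours of a coloured permutation. -/
def paletteStar (a : CPerm) : Finset ℕ := ((a.map Prod.snd).toFinset).erase 0

/-- Two coloured permutations are symbol-disjoint if they share no symbols. -/
def SymbolDisjoint (a b : CPerm) : Prop := Disjoint (symbols a) (symbols b)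

/-- `a` is `r`-coloured: all colours lie in `{0,…,r−1}`. -/
def RColoured (r : ℕ) (a : CPerm) : Prop := ∀ p ∈ a, p.2 < r

/-- Symbols of a coloured configuration (= multiset of coloured permutations). -/
def msymbols (f : Multiset CPerm) : Finset ℕ := (f.map symbols).sup

/-- `palette*` of a coloured configuration. -/
def mpalette (f : Multiset CPerm) : Finset ℕ := (f.map paletteStar).sup

/-- The shuffle of two coloured configurations (bi-additive extension). -/
def mshuffle (f g : Multiset CPerm) : Multiset CPerm :=
  f.bind fun a => g.bind fun b => shuffles a b

/-- Hadamard product of formal power series. -/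
def hadamard {R : Type*} [Semiring R] (A B : PowerSeries R) : PowerSeries R :=
  PowerSeries.mk fun k => (PowerSeries.coeff k) A * (PowerSeries.coeff k) B

/-- The geometric series `1/(1 − c·Y) = Σ_k c^k Y^k`. -/
def geom {R : Type*} [Semiring R] (c : R) : PowerSeries R :=
  PowerSeries.mk fun k => c ^ k

/-- The field ℚ(X) of rational functions. -/
abbrev K : Type := RatFunc ℚ

/-- The variable X of ℚ(X). -/
def XX : K := RatFunc.X

/-- Membership in `U = {±X^k : k ∈ ℤ}`. -/
def InU (u : K) : Prop := ∃ k : ℤ, u = XX ^ k ∨ u = -XX ^ k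

/-- `α(a) = Π_i α(γ_i)`. -/
def alphaProd (α : ℕ → K) (a : CPerm) : K := (a.map fun p => α p.2).prod

/-- The summand of `W^ε_{f,α}` corresponding to a single coloured permutation. -/
def Wterm (ε : ℤ) (α : ℕ → K) (a : CPerm) : PowerSeries K :=
  PowerSeries.C (alphaProd α a * XX ^ (ε * (comaj a : ℤ))) * PowerSeries.X ^ des a *
    ∏ i ∈ Finset.range (a.length + 1), geom (XX ^ (ε * (i : ℤ)))

/-- `W^ε_{f,α} = Σ_a f_a α(a) X^{ε·comaj(a)} Y^{des(a)} / ((1−Y)⋯(1−X^{ε|a|}Y))`. -/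
def W (ε : ℤ) (α : ℕ → K) (f : Multiset CPerm) : PowerSeries K :=
  (f.map (Wterm ε α)).sum

/-- `(f,α)` is a labelled coloured configuration. -/
def IsLCC (f : Multiset CPerm) (α : ℕ → K) : Prop :=
  (∀ a ∈ f, IsCPerm a) ∧ (∀ c, InU (α c)) ∧ (∀ c ∉ mpalette f, α c = 1)

section GeneralLemmas

open Finset PowerSeries

lemma sum_Icc_sum_Icc_add_sum_Icc_sum_Icc_succ {M : Type*} [AddCommMonoid M] {L N k : ℕ}
    (hNL : N ≤ L) (hLN : L ≤ N + 1) (t : ℕ → ℕ → M) :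
    ∑ v ∈ Icc L k, ∑ w ∈ Icc v k, t v w + ∑ w ∈ Icc N k, ∑ v ∈ Icc (w + 1) k, t v w =
      ∑ v ∈ Icc L k, ∑ w ∈ Icc N k, t v w := by
  have hle : ∑ v ∈ Icc L k, ∑ w ∈ Icc v k, t v w =
      ∑ v ∈ Icc L k, ∑ w ∈ Icc N k with v ≤ w, t v w := by
    refine sum_congr rfl fun v hv => ?_
    congr 1; ext w; simp only [mem_filter, mem_Icc] at hv ⊢; omega
  have hgt : ∑ w ∈ Icc N k, ∑ v ∈ Icc (w + 1) k, t v w =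
      ∑ v ∈ Icc L k, ∑ w ∈ Icc N k with ¬ v ≤ w, t v w := by
    refine sum_comm' fun w v => ?_
    simp only [mem_filter, mem_Icc]; omega
  rw [hle, hgt, ← sum_add_distrib]
  exact sum_congr rfl fun v _ => sum_filter_add_sum_filter_not _ _ _

lemma coeff_C_mul_X_pow_mul_geom_mul {R : Type*} [CommSemiring R] (c : R) (d k : ℕ) (F : R⟦X⟧) :
    coeff k (C (c ^ d) * X ^ d * geom c * F) = ∑ m ∈ Icc d k, c ^ m * coeff (k - m) F := by
  have htail : C (c ^ d) * X ^ d * geom c = PowerSeries.mk fun m => if d ≤ m then c ^ m else 0 := by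
    ext m
    rw [mul_assoc, coeff_C_mul, coeff_X_pow_mul', coeff_mk]
    split_ifs with h
    · rw [geom, coeff_mk, ← pow_add, Nat.add_sub_cancel' h]
    · rw [mul_zero]
  rw [htail, coeff_mul, Nat.sum_antidiagonal_eq_sum_range_succ (fun i j => coeff i _ * coeff j F)]
  simp only [coeff_mk, ite_mul, zero_mul]
  rw [← sum_filter]
  congr 1
  ext m
  simp only [mem_filter, mem_range, mem_Icc]
  omega

lemma hadamard_sum_map_sum_map {R ι κ : Type*} [Semiring R] (s : Multiset ι) (t : Multiset κ)
    (F : ι → R⟦X⟧) (G : κ → R⟦X⟧) :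
    hadamard (s.map F).sum (t.map G).sum =
      (s.map fun a => (t.map fun b => hadamard (F a) (G b)).sum).sum := by
  ext k
  simp only [hadamard, coeff_mk, map_multiset_sum, Multiset.map_map, Function.comp_def,
    Multiset.sum_map_mul_left, Multiset.sum_map_mul_right]

lemma perm_append_of_mem_shuffles {α : Type*} {a b c : List α} (hc : c ∈ shuffles a b) :
    c.Perm (a ++ b) := by
  induction a, b using shuffles.induct generalizing c with
  | case1 b => rw [shuffles, Multiset.mem_singleton] at hc; simp [hc]
  | case2 e as => rw [shuffles, Multiset.mem_singleton] at hc; simp [hc]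
  | case3 e as f bs ih₁ ih₂ =>
    rw [shuffles, Multiset.mem_add, Multiset.mem_map, Multiset.mem_map] at hc
    rcases hc with ⟨c, hc, rfl⟩ | ⟨c, hc, rfl⟩
    · exact (ih₁ hc).cons e
    · exact ((ih₂ hc).cons f).trans List.perm_middle.symm

end GeneralLemmas

lemma cLt_trans {p q r : ℕ × ℕ} (hpq : cLt p q) (hqr : cLt q r) : cLt p r := by
  unfold cLt at *; omega

lemma cLt_asymm {p q : ℕ × ℕ} (h : cLt p q) : ¬ cLt q p := by
  unfold cLt at *; omega

lemma cLt_or_cLt_of_fst_ne {p q : ℕ × ℕ} (h : p.1 ≠ q.1) : cLt p q ∨ cLt q p := by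
  unfold cLt; omega

lemma cLt_zero_iff (p : ℕ × ℕ) : cLt p (0, 0) ↔ p.2 ≠ 0 := by
  unfold cLt; omega

section Descents

def desFrom : ℕ × ℕ → CPerm → ℕ
  | _, [] => 0
  | p, e :: a => (if cLt e p then 1 else 0) + desFrom e a

def comajFrom : ℕ × ℕ → CPerm → ℕ
  | _, [] => 0
  | p, e :: a => (if cLt e p then a.length + 1 else 0) + comajFrom e a

lemma sum_range_descents_eq_desFrom (p : ℕ × ℕ) (a : CPerm) :
    ∑ i ∈ Finset.range a.length,
        (if cLt ((p :: a).getD (i + 1) (0, 0)) ((p :: a).getD i (0, 0)) then 1 else 0) =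
      desFrom p a := by
  induction a generalizing p with
  | nil => rfl
  | cons e a ih =>
    rw [List.length_cons, Finset.sum_range_succ', add_comm]
    simp [desFrom, ← ih]

lemma sum_range_descents_eq_comajFrom (p : ℕ × ℕ) (a : CPerm) :
    ∑ i ∈ Finset.range a.length,
        (if cLt ((p :: a).getD (i + 1) (0, 0)) ((p :: a).getD i (0, 0)) then a.length - i
          else 0) =
      comajFrom p a := by
  induction a generalizing p with
  | nil => rfl
  | cons e a ih =>
    rw [List.length_cons, Finset.sum_range_succ', add_comm]
    simp [comajFrom, ← ih]

lemma mem_DesSet_iff {a : CPerm} {i : ℕ} :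
    i ∈ DesSet a ↔ i < a.length ∧
      cLt (((0, 0) :: a).getD (i + 1) (0, 0)) (((0, 0) :: a).getD i (0, 0)) := by
  rcases i with _ | i <;> simp [DesSet, cLt_zero_iff]

lemma des_eq_desFrom (a : CPerm) : des a = desFrom (0, 0) a := by
  rw [des, Finset.card_eq_sum_ones, ← sum_range_descents_eq_desFrom, ← Finset.sum_filter]
  congr 1; ext i; simp [mem_DesSet_iff]

lemma comaj_eq_comajFrom (a : CPerm) : comaj a = comajFrom (0, 0) a := by
  rw [comaj, ← sum_range_descents_eq_comajFrom, ← Finset.sum_filter]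
  congr 1; ext i; simp [mem_DesSet_iff]

end Descents

section CompatSum

open Finset PowerSeries

variable {R : Type*} [CommSemiring R]

/-- `compatSum x k p ℓ a` is the sum of `x ^ (v₁ + ⋯ + vₙ)` over all `ℓ ≤ v₁ ≤ ⋯ ≤ vₙ ≤ k` with
`vᵢ < vᵢ₊₁` at every descent of `p :: a` (where `v₀ = ℓ` is the value of `p`). -/
def compatSum (x : R) (k : ℕ) : ℕ × ℕ → ℕ → CPerm → R
  | _, _, [] => 1
  | p, ℓ, e :: a => ∑ v ∈ Icc (ℓ + if cLt e p then 1 else 0) k, x ^ v * compatSum x k e v a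

lemma compatSum_add_add (x : R) (k s : ℕ) (p : ℕ × ℕ) (ℓ : ℕ) (a : CPerm) :
    compatSum x (k + s) p (ℓ + s) a = x ^ (s * a.length) * compatSum x k p ℓ a := by
  induction a generalizing p ℓ with
  | nil => simp [compatSum]
  | cons e a ih =>
    simp only [compatSum, mul_sum, List.length_cons]
    rw [add_right_comm, ← map_add_right_Icc, sum_map]
    refine sum_congr rfl fun v _ => ?_
    rw [addRightEmbedding_apply, ih]
    ring

lemma compatSum_cons_zero (x : R) (k : ℕ) (p e : ℕ × ℕ) (a : CPerm) :
    compatSum x k p 0 (e :: a) =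
      ∑ m ∈ Icc (if cLt e p then 1 else 0) k,
        (x ^ (a.length + 1)) ^ m * compatSum x (k - m) e 0 a := by
  rw [compatSum, zero_add]
  refine sum_congr rfl fun m hm => ?_
  have hshift := compatSum_add_add x (k - m) m e 0 a
  rw [Nat.sub_add_cancel (mem_Icc.mp hm).2, zero_add] at hshift
  rw [hshift]
  ring

def compatSeries (x : R) (p : ℕ × ℕ) (a : CPerm) : R⟦X⟧ :=
  PowerSeries.mk fun k => compatSum x k p 0 a

lemma compatSeries_cons (x : R) (p e : ℕ × ℕ) (a : CPerm) :
    compatSeries x p (e :: a) =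
      C ((x ^ (a.length + 1)) ^ (if cLt e p then 1 else 0)) * X ^ (if cLt e p then 1 else 0) *
        geom (x ^ (a.length + 1)) * compatSeries x e a := by
  ext k
  rw [coeff_C_mul_X_pow_mul_geom_mul, compatSeries, coeff_mk, compatSum_cons_zero]
  simp only [compatSeries, coeff_mk]

lemma compatSeries_eq (x : R) (p : ℕ × ℕ) (a : CPerm) :
    compatSeries x p a =
      C (x ^ comajFrom p a) * X ^ desFrom p a * ∏ i ∈ range (a.length + 1), geom (x ^ i) := by
  induction a generalizing p with
  | nil =>
    ext k
    simp [compatSeries, compatSum, desFrom, comajFrom, geom]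
  | cons e a ih =>
    rw [compatSeries_cons, ih, List.length_cons, prod_range_succ _ (a.length + 1), desFrom,
      comajFrom]
    split_ifs <;> simp only [map_mul, pow_add, map_pow, pow_one, pow_zero, map_one, one_mul,
      mul_one, zero_add] <;> ring

/-- The pairs `(v, w)` of first values split into `v ≤ w` and `w < v`: since `e < f`, these are
the first values of the shuffles beginning with `e`, resp. with `f`. -/
lemma compatSum_cons_mul_compatSum_cons_of_cLt (x : R) (k : ℕ) (p : ℕ × ℕ) (ℓ : ℕ)
    {e f : ℕ × ℕ} (as bs : CPerm) (hef : cLt e f) :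
    compatSum x k p ℓ (e :: as) * compatSum x k p ℓ (f :: bs) =
      ∑ v ∈ Icc (ℓ + if cLt e p then 1 else 0) k,
          x ^ v * (compatSum x k e v as * compatSum x k e v (f :: bs)) +
        ∑ w ∈ Icc (ℓ + if cLt f p then 1 else 0) k,
          x ^ w * (compatSum x k f w (e :: as) * compatSum x k f w bs) := by
  set t : ℕ → ℕ → R := fun v w => x ^ v * compatSum x k e v as * (x ^ w * compatSum x k f w bs)
  have hfirst : ∀ v, x ^ v * (compatSum x k e v as * compatSum x k e v (f :: bs)) =
      ∑ w ∈ Icc v k, t v w := by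
    intro v
    rw [compatSum, if_neg (cLt_asymm hef), add_zero, mul_sum, mul_sum]
    exact sum_congr rfl fun w _ => by ring
  have hsecond : ∀ w, x ^ w * (compatSum x k f w (e :: as) * compatSum x k f w bs) =
      ∑ v ∈ Icc (w + 1) k, t v w := by
    intro w
    rw [compatSum, if_pos hef, sum_mul, mul_sum]
    exact sum_congr rfl fun v _ => by ring
  have hmono : (if cLt f p then 1 else 0) ≤ (if cLt e p then 1 else 0) := by
    by_cases hfp : cLt f p
    · rw [if_pos hfp, if_pos (cLt_trans hef hfp)]
    · rw [if_neg hfp]; exact Nat.zero_le _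
  simp only [hfirst, hsecond]
  rw [sum_Icc_sum_Icc_add_sum_Icc_sum_Icc_succ (by omega) (by split_ifs <;> omega), compatSum,
    compatSum, sum_mul_sum]

lemma compatSum_cons_mul_compatSum_cons (x : R) (k : ℕ) (p : ℕ × ℕ) (ℓ : ℕ)
    {e f : ℕ × ℕ} (as bs : CPerm) (hef : e.1 ≠ f.1) :
    compatSum x k p ℓ (e :: as) * compatSum x k p ℓ (f :: bs) =
      ∑ v ∈ Icc (ℓ + if cLt e p then 1 else 0) k,
          x ^ v * (compatSum x k e v as * compatSum x k e v (f :: bs)) +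
        ∑ w ∈ Icc (ℓ + if cLt f p then 1 else 0) k,
          x ^ w * (compatSum x k f w (e :: as) * compatSum x k f w bs) := by
  rcases cLt_or_cLt_of_fst_ne hef with hlt | hlt
  · exact compatSum_cons_mul_compatSum_cons_of_cLt x k p ℓ as bs hlt
  · rw [mul_comm, compatSum_cons_mul_compatSum_cons_of_cLt x k p ℓ bs as hlt, add_comm]
    simp only [mul_comm (compatSum x k _ _ bs), mul_comm (compatSum x k _ _ (f :: bs))]

lemma sum_compatSum_shuffles (x : R) (k : ℕ) {a b : CPerm}
    (hab : ∀ y ∈ a, ∀ z ∈ b, y.1 ≠ z.1) (p : ℕ × ℕ) (ℓ : ℕ) :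
    ((shuffles a b).map (compatSum x k p ℓ)).sum = compatSum x k p ℓ a * compatSum x k p ℓ b := by
  induction a, b using shuffles.induct generalizing p ℓ with
  | case1 b => simp [shuffles, compatSum]
  | case2 e as => simp [shuffles, compatSum]
  | case3 e as f bs ih₁ ih₂ =>
    have hfirst : ((shuffles as (f :: bs)).map fun c => compatSum x k p ℓ (e :: c)).sum =
        ∑ v ∈ Icc (ℓ + if cLt e p then 1 else 0) k,
          x ^ v * (compatSum x k e v as * compatSum x k e v (f :: bs)) := by
      simp only [compatSum.eq_2 x k p ℓ e, Multiset.sum_map_sum, Multiset.sum_map_mul_left]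
      exact sum_congr rfl fun v _ => by
        rw [ih₁ (fun y hy z hz => hab y (List.mem_cons_of_mem e hy) z hz)]
    have hsecond : ((shuffles (e :: as) bs).map fun c => compatSum x k p ℓ (f :: c)).sum =
        ∑ w ∈ Icc (ℓ + if cLt f p then 1 else 0) k,
          x ^ w * (compatSum x k f w (e :: as) * compatSum x k f w bs) := by
      simp only [compatSum.eq_2 x k p ℓ f, Multiset.sum_map_sum, Multiset.sum_map_mul_left]
      exact sum_congr rfl fun w _ => by
        rw [ih₂ (fun y hy z hz => hab y hy z (List.mem_cons_of_mem f hz))]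
    rw [shuffles, Multiset.map_add, Multiset.sum_add, Multiset.map_map, Multiset.map_map,
      compatSum_cons_mul_compatSum_cons x k p ℓ as bs (hab e (by simp) f (by simp))]
    exact congrArg₂ (· + ·) hfirst hsecond

end CompatSum

section Configurations

open PowerSeries

lemma mem_mpalette {f : Multiset CPerm} {c : ℕ} :
    c ∈ mpalette f ↔ ∃ a ∈ f, c ∈ paletteStar a := by
  unfold mpalette
  induction f using Multiset.induction with
  | empty => simp
  | cons a f ih => simp [ih]

lemma zero_notMem_mpalette (f : Multiset CPerm) : 0 ∉ mpalette f := by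
  simp [mem_mpalette, paletteStar]

lemma mem_mpalette_of_mem {f : Multiset CPerm} {a : CPerm} {p : ℕ × ℕ} (ha : a ∈ f)
    (hp : p ∈ a) (hp0 : p.2 ≠ 0) : p.2 ∈ mpalette f :=
  mem_mpalette.2 ⟨a, ha, Finset.mem_erase.2 ⟨hp0, List.mem_toFinset.2 (List.mem_map_of_mem hp)⟩⟩

lemma fst_ne_of_disjoint_msymbols {f g : Multiset CPerm}
    (hfg : Disjoint (msymbols f) (msymbols g)) {a b : CPerm} (ha : a ∈ f) (hb : b ∈ g) :
    ∀ y ∈ a, ∀ z ∈ b, y.1 ≠ z.1 := by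
  intro y hy z hz hyz
  have hya : y.1 ∈ msymbols f := Multiset.le_sup (Multiset.mem_map_of_mem symbols ha)
    (List.mem_toFinset.2 (List.mem_map_of_mem hy))
  have hzb : z.1 ∈ msymbols g := Multiset.le_sup (Multiset.mem_map_of_mem symbols hb)
    (List.mem_toFinset.2 (List.mem_map_of_mem hz))
  exact Finset.disjoint_left.1 hfg hya (hyz ▸ hzb)

lemma alphaProd_of_mem_shuffles (γ : ℕ → K) {a b c : CPerm} (hc : c ∈ shuffles a b) :
    alphaProd γ c = alphaProd γ a * alphaProd γ b := by
  rw [alphaProd, ((perm_append_of_mem_shuffles hc).map _).prod_eq, List.map_append,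
    List.prod_append, alphaProd, alphaProd]

lemma W_congr (ε : ℤ) {α γ : ℕ → K} {f : Multiset CPerm}
    (h : ∀ a ∈ f, ∀ p ∈ a, α p.2 = γ p.2) : W ε α f = W ε γ f := by
  refine congrArg Multiset.sum (Multiset.map_congr rfl fun a ha => ?_)
  rw [Wterm, Wterm, alphaProd, alphaProd, List.map_congr_left (h a ha)]

lemma W_mshuffle (ε : ℤ) (γ : ℕ → K) (f g : Multiset CPerm) :
    W ε γ (mshuffle f g) = (f.map fun a => (g.map fun b => W ε γ (shuffles a b)).sum).sum := by
  simp only [W, mshuffle, Multiset.map_bind, Multiset.sum_bind]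

lemma Wterm_eq (ε : ℤ) (α : ℕ → K) (a : CPerm) :
    Wterm ε α a = C (alphaProd α a) * compatSeries (XX ^ ε) (0, 0) a := by
  simp only [Wterm, compatSeries_eq, ← des_eq_desFrom, ← comaj_eq_comajFrom, zpow_mul,
    zpow_natCast, map_mul]
  ring

lemma coeff_Wterm (ε : ℤ) (α : ℕ → K) (a : CPerm) (k : ℕ) :
    coeff k (Wterm ε α a) = alphaProd α a * compatSum (XX ^ ε) k (0, 0) 0 a := by
  rw [Wterm_eq, coeff_C_mul, compatSeries, coeff_mk]

lemma hadamard_Wterm_Wterm (ε : ℤ) (γ : ℕ → K) {a b : CPerm}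
    (hab : ∀ y ∈ a, ∀ z ∈ b, y.1 ≠ z.1) :
    hadamard (Wterm ε γ a) (Wterm ε γ b) = W ε γ (shuffles a b) := by
  ext k
  rw [hadamard, coeff_mk, W, map_multiset_sum, Multiset.map_map]
  simp only [Function.comp_def, coeff_Wterm]
  rw [Multiset.map_congr rfl fun c hc => by rw [alphaProd_of_mem_shuffles γ hc],
    Multiset.sum_map_mul_left, sum_compatSum_shuffles _ _ hab]
  ring

end Configurations

/-- **Theorem (main, elementary form).** For coherent labelled coloured configurations
`(f,α)` and `(g,β)` and any `ε ∈ ℤ`, one has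
`W^ε_{f,α} *_Y W^ε_{g,β} = W^ε_{f⧢g, α∪β}` in `ℚ(X)⟦Y⟧`. -/
theorem hadamard_W_eq_W_shuffle (ε : ℤ) (f g : Multiset CPerm) (α β : ℕ → K)
    (hf : IsLCC f α) (hg : IsLCC g β)
    (hdisj : Disjoint (msymbols f) (msymbols g))
    (hcoh : ∀ c ∈ mpalette f ∩ mpalette g, α c = β c) :
    hadamard (W ε α f) (W ε β g) =
      W ε (fun c => if c ∈ mpalette f then α c else if c ∈ mpalette g then β c else 1)
        (mshuffle f g) := by
  set γ : ℕ → K := fun c => if c ∈ mpalette f then α c else if c ∈ mpalette g then β c else 1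
  have hαγ : ∀ a ∈ f, ∀ p ∈ a, α p.2 = γ p.2 := by
    intro a ha p hp
    by_cases hpf : p.2 ∈ mpalette f
    · simp only [γ, if_pos hpf]
    · have hp0 : p.2 = 0 := by_contra fun h => hpf (mem_mpalette_of_mem ha hp h)
      simp only [γ, hp0, hf.2.2 0 (zero_notMem_mpalette f), zero_notMem_mpalette, if_false]
  have hβγ : ∀ b ∈ g, ∀ p ∈ b, β p.2 = γ p.2 := by
    intro b hb p hp
    by_cases hpg : p.2 ∈ mpalette g
    · by_cases hpf : p.2 ∈ mpalette f
      · simp only [γ, if_pos hpf, hcoh p.2 (Finset.mem_inter.2 ⟨hpf, hpg⟩)]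
      · simp only [γ, if_neg hpf, if_pos hpg]
    · have hp0 : p.2 = 0 := by_contra fun h => hpg (mem_mpalette_of_mem hb hp h)
      simp only [γ, hp0, hg.2.2 0 (zero_notMem_mpalette g), zero_notMem_mpalette, if_false]
  rw [W_congr ε hαγ, W_congr ε hβγ, W, W, hadamard_sum_map_sum_map, W_mshuffle]
  refine congrArg Multiset.sum (Multiset.map_congr rfl fun a ha => ?_)
  refine congrArg Multiset.sum (Multiset.map_congr rfl fun b hb => ?_)
  exact hadamard_Wterm_Wterm ε γ (fst_ne_of_disjoint_msymbols hdisj ha hb)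
end
end

section
/- The tuple of coloured permutation statistics (des, comaj, col) is shuffle compatible: if a, b are symbol-disjoint coloured permutations and a', b' are symbol-disjoint coloured permutations with |a| = |a'|, |b| = |b'|, des(a) = des(a'), comaj(a) = comaj(a'), col(a) = col(a'), des(b) = des(b'), comaj(b) = comaj(b'), and col(b) = col(b'), then the multisets {(des(c), comaj(c), col(c)) : c ∈ a⧢b} and {(des(c'), comaj(c'), col(c')) : c' ∈ a'⧢b'} are equal. -/
open scoped Classical

noncomputable section

/-!
Stanley's P-partition argument. For a bound `k`, let `labelSum k c` be the generating polynomial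
`Σ X^(w₁ + ⋯ + wₙ)` of the labellings `0 ≤ w₁ ≤ ⋯ ≤ wₙ ≤ k` of the letters of `c` that increase
strictly at the descents of `c`. Labellings of the shuffles of two letter-disjoint words are the
pairs of labellings of the two words, so the sum over `a ⧢ b` factorises. Subtracting the forced
increments gives `labelSum k c = X^comaj(c) · [k - des(c) + n, n]_X`, which depends only on
`(n, des c, comaj c)`; being unitriangular in `k`, these sums determine the multiset of
`(des, comaj)` over `a ⧢ b`. The colour vector is the same for every shuffle.
-/

open Finset Polynomial

section Shuffles

variable {α : Type*}

theorem shuffles_nil_left (l : List α) : shuffles [] l = {l} := by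
  rw [shuffles]

theorem shuffles_nil_right (l : List α) : shuffles l [] = {l} := by
  cases l <;> rw [shuffles]

theorem shuffles_cons_cons (x y : α) (l₁ l₂ : List α) :
    shuffles (x :: l₁) (y :: l₂) =
      (shuffles l₁ (y :: l₂)).map (x :: ·) + (shuffles (x :: l₁) l₂).map (y :: ·) := by
  rw [shuffles]

theorem perm_of_mem_shuffles {l₁ l₂ e : List α} (he : e ∈ shuffles l₁ l₂) :
    e.Perm (l₁ ++ l₂) := by
  induction l₁, l₂ using shuffles.induct generalizing e with
  | case1 l => simp_all [shuffles_nil_left]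
  | case2 x l => simp_all [shuffles_nil_right]
  | case3 x l₁ y l₂ ih₁ ih₂ =>
    rw [shuffles_cons_cons, Multiset.mem_add, Multiset.mem_map, Multiset.mem_map] at he
    rcases he with ⟨e, he, rfl⟩ | ⟨e, he, rfl⟩
    · exact (ih₁ he).cons x
    · exact ((ih₂ he).cons y).trans List.perm_middle.symm

end Shuffles

theorem colVec_eq_of_perm {c d : CPerm} (h : c.Perm d) : colVec c = colVec d :=
  funext fun j => (h.map Prod.snd).count_eq j

theorem colVec_append (c d : CPerm) : colVec (c ++ d) = colVec c + colVec d :=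
  funext fun j => by simp [colVec, List.count_append]

theorem IsCPerm.nodup_cons_zero {c : CPerm} (hc : IsCPerm c) : ((0, 0) :: c).Nodup :=
  List.nodup_cons.mpr ⟨fun h => (hc.2 _ h).ne rfl, hc.1.of_map Prod.fst⟩

theorem SymbolDisjoint.disjoint {c d : CPerm} (h : SymbolDisjoint c d) : c.Disjoint d :=
  fun x hc hd => Finset.disjoint_left.mp h (by simpa [symbols] using ⟨x.2, hc⟩)
    (by simpa [symbols] using ⟨x.2, hd⟩)

def descentSumFrom (wt : ℕ → ℕ) : ℕ × ℕ → CPerm → ℕ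
  | _, [] => 0
  | q, r :: c => (if cLt r q then wt (c.length + 1) else 0) + descentSumFrom wt r c

theorem descentSumFrom_cons (wt : ℕ → ℕ) (q r : ℕ × ℕ) (c : CPerm) :
    descentSumFrom wt q (r :: c) =
      (if cLt r q then wt (c.length + 1) else 0) + descentSumFrom wt r c := rfl

theorem sum_filter_descents_eq_descentSumFrom (wt : ℕ → ℕ) (q : ℕ × ℕ) (c : CPerm) :
    ∑ i ∈ (range c.length).filter (fun i => cLt (c.getD i (0, 0)) ((q :: c).getD i (0, 0))),
      wt (c.length - i) = descentSumFrom wt q c := by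
  induction c generalizing q with
  | nil => rfl
  | cons r c ih =>
    rw [sum_filter, List.length_cons, sum_range_succ', descentSumFrom_cons, ← ih, sum_filter,
      add_comm]
    simp

/-- The convention for position `0` amounts to a sentinel letter `(0, 0)` in front of `c`. -/
theorem desSet_eq_filter (c : CPerm) :
    DesSet c = (range c.length).filter
      (fun i => cLt (c.getD i (0, 0)) (((0, 0) :: c).getD i (0, 0))) := by
  refine filter_congr fun i _ => ?_
  rcases i with _ | i
  · simp [cLt, Nat.pos_iff_ne_zero]
  · simp

theorem des_eq_descentSumFrom (c : CPerm) : des c = descentSumFrom (fun _ => 1) (0, 0) c := by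
  rw [des, card_eq_sum_ones, desSet_eq_filter]
  exact sum_filter_descents_eq_descentSumFrom (fun _ => 1) _ c

theorem comaj_eq_descentSumFrom (c : CPerm) : comaj c = descentSumFrom id (0, 0) c := by
  rw [comaj, desSet_eq_filter]
  exact sum_filter_descents_eq_descentSumFrom id _ c

/-- `Σ X^(g₁ + ⋯ + gₙ)` over `0 ≤ g₁ ≤ ⋯ ≤ gₙ ≤ m` (the Gaussian binomial `[m + n, n]_X`),
split according to the value `u` of `g₁`; it vanishes for `m < 0`. -/
def chainSum : ℕ → ℤ → ℤ[X]
  | 0, m => if 0 ≤ m then 1 else 0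
  | n + 1, m => ∑ u ∈ range (m.toNat + 1), X ^ ((n + 1) * u) * chainSum n (m - u)

theorem chainSum_of_neg (n : ℕ) {m : ℤ} (hm : m < 0) : chainSum n m = 0 := by
  induction n generalizing m with
  | zero => simp [chainSum, hm]
  | succ n ih => exact sum_eq_zero fun u _ => by rw [ih (by omega), mul_zero]

theorem chainSum_zero (n : ℕ) : chainSum n 0 = 1 := by
  induction n with
  | zero => rfl
  | succ n ih => simp [chainSum, ih]

theorem sum_range_mul_chainSum (n M : ℕ) {m : ℤ} (hm : m ≤ M) :
    ∑ u ∈ range (M + 1), X ^ ((n + 1) * u) * chainSum n (m - u) = chainSum (n + 1) m := by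
  refine (sum_subset (range_subset_range.mpr (by omega)) fun u _ hu => ?_).symm
  rw [mem_range, not_lt] at hu
  rw [chainSum_of_neg n (by omega), mul_zero]

theorem sum_range_ite_le_mul_chainSum (n k v : ℕ) {m : ℤ} (hm : m ≤ k) :
    ∑ w ∈ range (k + 1), (if v ≤ w then X ^ ((n + 1) * w) * chainSum n (m - w) else 0) =
      X ^ ((n + 1) * v) * chainSum (n + 1) (m - v) := by
  rcases lt_or_ge k v with hkv | hvk
  · rw [chainSum_of_neg _ (by omega), mul_zero]
    exact sum_eq_zero fun w hw => if_neg (by simp at hw; omega)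
  have hIco : (range (k + 1)).filter (v ≤ ·) = Ico v (k + 1) := by ext; simp; omega
  rw [← sum_filter, hIco, sum_Ico_eq_sum_range, Nat.sub_add_comm hvk,
    ← sum_range_mul_chainSum n (k - v) (m := m - v) (by omega), mul_sum]
  refine sum_congr rfl fun u _ => ?_
  rw [← mul_assoc, ← pow_add, mul_add, sub_sub, Nat.cast_add]

def pLt (p q : ℕ × (ℕ × ℕ)) : Prop := p.1 < q.1 ∨ (p.1 = q.1 ∧ cLt p.2 q.2)

instance : DecidableRel pLt := fun p q => by unfold pLt; infer_instance

theorem pLt_trans {p q r : ℕ × (ℕ × ℕ)} (hpq : pLt p q) (hqr : pLt q r) : pLt p r := by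
  unfold pLt cLt at *; omega

theorem pLt_xor_pLt {p q : ℕ × (ℕ × ℕ)} (h : p.2 ≠ q.2) : Xor (pLt p q) (pLt q p) := by
  rw [Ne, Prod.ext_iff] at h; unfold Xor pLt cLt; omega

theorem pLt_iff {v w : ℕ} {q r : ℕ × ℕ} (h : q ≠ r) :
    pLt (v, q) (w, r) ↔ v + (if cLt r q then 1 else 0) ≤ w := by
  rw [Ne, Prod.ext_iff] at h
  by_cases hrq : cLt r q <;> simp only [hrq, if_true, if_false] <;> unfold pLt cLt at * <;>
    simp only at * <;> omega

/-- `labelSum k p c = Σ X^(w₁ + ⋯ + wₙ)` over the labels `wᵢ ∈ [0, k]` of the letters of `c` with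
`p < (w₁, c₁) < ⋯ < (wₙ, cₙ)` for `pLt`: the `k`-th coefficient of Stanley's P-partition
generating function of the chain `c`. -/
def labelSum (k : ℕ) : ℕ × (ℕ × ℕ) → CPerm → ℤ[X]
  | _, [] => 1
  | p, q :: c => ∑ w ∈ range (k + 1), if pLt p (w, q) then X ^ w * labelSum k (w, q) c else 0

theorem labelSum_cons (k : ℕ) (p : ℕ × (ℕ × ℕ)) (q : ℕ × ℕ) (c : CPerm) :
    labelSum k p (q :: c) =
      ∑ w ∈ range (k + 1), if pLt p (w, q) then X ^ w * labelSum k (w, q) c else 0 := rfl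

theorem labelSum_eq (k : ℕ) {v : ℕ} (hv : v ≤ k) {q : ℕ × ℕ} {c : CPerm}
    (hc : (q :: c).IsChain (· ≠ ·)) :
    labelSum k (v, q) c = X ^ (c.length * v + descentSumFrom id q c) *
      chainSum c.length (k - v - descentSumFrom (fun _ => 1) q c) := by
  induction c generalizing v q with
  | nil => simp [labelSum, descentSumFrom, chainSum, hv]
  | cons r c ih =>
    rw [List.isChain_cons_cons] at hc
    set δ := if cLt r q then 1 else 0
    have hδ : descentSumFrom id q (r :: c) = δ * (c.length + 1) + descentSumFrom id r c := by
      rw [descentSumFrom_cons]; split_ifs <;> simp [δ, *]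
    calc labelSum k (v, q) (r :: c)
        = ∑ w ∈ range (k + 1), X ^ descentSumFrom id r c * (if v + δ ≤ w then
            X ^ ((c.length + 1) * w) *
              chainSum c.length (k - descentSumFrom (fun _ => 1) r c - w) else 0) := by
          refine sum_congr rfl fun w hw => ?_
          simp only [pLt_iff hc.1, mul_ite, mul_zero]
          refine if_congr Iff.rfl ?_ rfl
          rw [ih (by simpa [Nat.lt_succ_iff] using hw) hc.2, ← mul_assoc, ← pow_add, ← mul_assoc,
            ← pow_add, sub_right_comm]
          ring
      _ = X ^ ((c.length + 1) * v + descentSumFrom id q (r :: c)) *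
            chainSum (c.length + 1) (k - v - descentSumFrom (fun _ => 1) q (r :: c)) := by
          rw [← mul_sum, sum_range_ite_le_mul_chainSum _ _ _ (by omega), hδ, ← mul_assoc,
            ← pow_add, descentSumFrom_cons]
          congr 2
          · ring
          · simp only [δ]; push_cast; ring

theorem labelSum_zero_eq (k : ℕ) {c : CPerm} (hc : ((0, 0) :: c).Nodup) :
    labelSum k (0, (0, 0)) c = X ^ comaj c * chainSum c.length (k - des c) := by
  rw [labelSum_eq k (Nat.zero_le k) (List.Pairwise.isChain hc), des_eq_descentSumFrom,
    comaj_eq_descentSumFrom]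
  simp

/-- The merging identity behind the shuffle product: when exactly one of `D w z`, `E z w` holds
and both are compatible with the lower bounds `A`, `B`, each pair `(w, z)` is counted once. -/
theorem sum_ite_mul_sum_add_sum_ite_mul {ι R : Type*} [CommSemiring R] (s : Finset ι)
    (f g : ι → R) (A B : ι → Prop) [DecidablePred A] [DecidablePred B]
    (D E : ι → ι → Prop) [DecidableRel D] [DecidableRel E] (hDE : ∀ w z, Xor (D w z) (E z w))
    (hAD : ∀ w z, A w → D w z → B z) (hBE : ∀ w z, B z → E z w → A w) :
    (∑ w ∈ s, if A w then f w * ∑ z ∈ s, (if D w z then g z else 0) else 0) +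
      (∑ z ∈ s, if B z then (∑ w ∈ s, if E z w then f w else 0) * g z else 0) =
    (∑ w ∈ s, if A w then f w else 0) * ∑ z ∈ s, if B z then g z else 0 := by
  simp only [ite_mul, zero_mul, mul_ite, mul_zero, mul_sum, sum_mul, ite_sum_zero, ← ite_and]
  rw [sum_comm (s := s) (t := s) (f := fun w z => if A w ∧ D w z then _ else 0),
    ← sum_add_distrib]
  refine sum_congr rfl fun z _ => ?_
  rw [← sum_add_distrib]
  refine sum_congr rfl fun w _ => ?_
  have hABD := hAD w z
  have hBAE := hBE w z
  rcases hDE w z with ⟨hD, hE⟩ | ⟨hE, hD⟩ <;> by_cases hA : A w <;> by_cases hB : B z <;>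
    simp_all

theorem sum_map_labelSum_cons (k : ℕ) (p : ℕ × (ℕ × ℕ)) (q : ℕ × ℕ) (S : Multiset CPerm) :
    (S.map fun e => labelSum k p (q :: e)).sum =
      ∑ w ∈ range (k + 1), if pLt p (w, q) then X ^ w * (S.map (labelSum k (w, q))).sum else 0 := by
  induction S using Multiset.induction with
  | empty => simp
  | cons e S ih =>
    rw [Multiset.map_cons, Multiset.sum_cons, ih, labelSum_cons, ← sum_add_distrib]
    refine sum_congr rfl fun w _ => ?_
    split_ifs <;> simp [mul_add]

/-- A labelling of a shuffle of `c` and `d` is the same as a labelling of `c` together with one of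
`d`: read the labelled letters in increasing `pLt` order. -/
theorem sum_map_labelSum_shuffles (k : ℕ) {c d : CPerm} (hcd : c.Disjoint d)
    (p : ℕ × (ℕ × ℕ)) :
    ((shuffles c d).map (labelSum k p)).sum = labelSum k p c * labelSum k p d := by
  induction c, d using shuffles.induct generalizing p with
  | case1 d => simp [shuffles_nil_left, labelSum]
  | case2 q c => simp [shuffles_nil_right, labelSum]
  | case3 q c r d ih₁ ih₂ =>
    have hqr : q ≠ r := fun h => hcd List.mem_cons_self (h ▸ List.mem_cons_self)
    rw [shuffles_cons_cons, Multiset.map_add, Multiset.sum_add, Multiset.map_map,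
      Multiset.map_map, Function.comp_def, Function.comp_def, sum_map_labelSum_cons,
      sum_map_labelSum_cons]
    simp only [ih₁ (List.disjoint_cons_left.mp hcd).2, ih₂ (List.disjoint_cons_right.mp hcd).2,
      labelSum_cons (q := q), labelSum_cons (q := r)]
    rw [← sum_ite_mul_sum_add_sum_ite_mul (range (k + 1)) (fun w => X ^ w * labelSum k (w, q) c)
      (fun z => X ^ z * labelSum k (z, r) d) (fun w => pLt p (w, q)) (fun z => pLt p (z, r))
      (fun w z => pLt (w, q) (z, r)) (fun z w => pLt (z, r) (w, q))
      (fun _ _ => pLt_xor_pLt hqr) (fun _ _ => pLt_trans) (fun _ _ => pLt_trans)]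
    refine congrArg₂ (· + ·) (sum_congr rfl fun _ _ => ?_) (sum_congr rfl fun _ _ => ?_) <;>
      split_ifs <;> ring

def pairGF (S : Multiset (ℕ × ℕ)) : PowerSeries ℤ[X] :=
  (S.map fun x => PowerSeries.C (X ^ x.2) * PowerSeries.X ^ x.1).sum

def chainSumGF (n : ℕ) : PowerSeries ℤ[X] := PowerSeries.mk fun M => chainSum n M

theorem chainSumGF_ne_zero (n : ℕ) : chainSumGF n ≠ 0 := fun h => by
  simpa [chainSumGF, chainSum_zero] using congrArg (PowerSeries.coeff 0) h

theorem coeff_pairGF_mul_chainSumGF (S : Multiset (ℕ × ℕ)) (n k : ℕ) :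
    PowerSeries.coeff k (pairGF S * chainSumGF n) =
      (S.map fun x => X ^ x.2 * chainSum n (k - x.1)).sum := by
  induction S using Multiset.induction with
  | empty => simp [pairGF]
  | cons x S ih =>
    rw [pairGF, Multiset.map_cons, Multiset.sum_cons, add_mul, map_add, ← pairGF, ih,
      Multiset.map_cons, Multiset.sum_cons, mul_assoc, PowerSeries.coeff_C_mul,
      PowerSeries.coeff_X_pow_mul']
    split_ifs with h
    · simp [chainSumGF, Nat.cast_sub h]
    · rw [chainSum_of_neg n (by omega), mul_zero]

theorem coeff_coeff_pairGF (S : Multiset (ℕ × ℕ)) (d m : ℕ) :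
    (PowerSeries.coeff d (pairGF S)).coeff m = S.count (d, m) := by
  induction S using Multiset.induction with
  | empty => simp [pairGF]
  | cons x S ih =>
    rw [pairGF, Multiset.map_cons, Multiset.sum_cons, map_add, ← pairGF, coeff_add, ih,
      Multiset.count_cons, PowerSeries.coeff_C_mul_X_pow]
    obtain ⟨d', m'⟩ := x
    by_cases hd : d = d' <;> by_cases hm : m = m' <;> simp [hd, hm, coeff_X_pow, add_comm]

/-- `chainSum n 0 = 1` and `chainSum n m = 0` for `m < 0`, so the sums below are unitriangular
in `k`; dividing by `chainSumGF n` inverts them. -/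
theorem eq_of_forall_sum_map_chainSum_eq (n : ℕ) {S T : Multiset (ℕ × ℕ)}
    (h : ∀ k : ℕ, (S.map fun x => X ^ x.2 * chainSum n (k - x.1)).sum =
      (T.map fun x => X ^ x.2 * chainSum n (k - x.1)).sum) : S = T := by
  have hGF : pairGF S = pairGF T := mul_right_cancel₀ (chainSumGF_ne_zero n) <|
    PowerSeries.ext fun k => by rw [coeff_pairGF_mul_chainSumGF, coeff_pairGF_mul_chainSumGF, h]
  ext ⟨d, m⟩
  exact_mod_cast (coeff_coeff_pairGF S d m).symm.trans
    (hGF ▸ coeff_coeff_pairGF T d m)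

theorem sum_map_shuffles_eq_mul (k : ℕ) {c d : CPerm} (hc : ((0, 0) :: c).Nodup)
    (hd : ((0, 0) :: d).Nodup) (hcd : c.Disjoint d) :
    ((shuffles c d).map fun e => X ^ comaj e * chainSum (c.length + d.length) (k - des e)).sum =
      X ^ comaj c * chainSum c.length (k - des c) *
        (X ^ comaj d * chainSum d.length (k - des d)) := by
  have hcd' : ((0, 0) :: (c ++ d)).Nodup :=
    (List.nodup_cons.mp hc).2.append (List.nodup_cons.mp hd).2 hcd |>.cons
      (by simpa using ⟨(List.nodup_cons.mp hc).1, (List.nodup_cons.mp hd).1⟩)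
  rw [← labelSum_zero_eq k hc, ← labelSum_zero_eq k hd, ← sum_map_labelSum_shuffles k hcd]
  refine congrArg Multiset.sum (Multiset.map_congr rfl fun e he => ?_)
  have hperm := perm_of_mem_shuffles he
  rw [labelSum_zero_eq k ((hperm.cons _).nodup_iff.mpr hcd'), hperm.length_eq, List.length_append]

theorem map_des_comaj_colVec_shuffles (c d : CPerm) :
    (shuffles c d).map (fun e => (des e, comaj e, colVec e)) =
      ((shuffles c d).map fun e => (des e, comaj e)).map
        fun x => (x.1, x.2, colVec (c ++ d)) := by
  rw [Multiset.map_map]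
  exact Multiset.map_congr rfl fun e he => by
    simp [colVec_eq_of_perm (perm_of_mem_shuffles he)]

/-- **Theorem.** The triple `(des, comaj, col)` of coloured permutation statistics is
shuffle compatible. -/
theorem des_comaj_col_shuffleCompatible (a b a' b' : CPerm)
    (ha : IsCPerm a) (hb : IsCPerm b) (ha' : IsCPerm a') (hb' : IsCPerm b')
    (hab : SymbolDisjoint a b) (hab' : SymbolDisjoint a' b')
    (hla : a.length = a'.length) (hlb : b.length = b'.length)
    (hda : des a = des a') (hdb : des b = des b')
    (hca : comaj a = comaj a') (hcb : comaj b = comaj b')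
    (hcola : colVec a = colVec a') (hcolb : colVec b = colVec b') :
    (shuffles a b).map (fun c => (des c, comaj c, colVec c)) =
      (shuffles a' b').map (fun c => (des c, comaj c, colVec c)) := by
  have hdc : (shuffles a b).map (fun c => (des c, comaj c)) =
      (shuffles a' b').map (fun c => (des c, comaj c)) := by
    refine eq_of_forall_sum_map_chainSum_eq (a.length + b.length) fun k => ?_
    simp only [Multiset.map_map, Function.comp_def]
    rw [sum_map_shuffles_eq_mul k ha.nodup_cons_zero hb.nodup_cons_zero hab.disjoint, hla, hlb,
      sum_map_shuffles_eq_mul k ha'.nodup_cons_zero hb'.nodup_cons_zero hab'.disjoint,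
      hda, hdb, hca, hcb]
  rw [map_des_comaj_colVec_shuffles, map_des_comaj_colVec_shuffles, hdc, colVec_append,
    colVec_append, hcola, hcolb]
end
end

section
/- Let n ≥ 1 and let d₁,…,d_n, e₁,…,e_n be positive integers with δ := d₁ − e₁ = ⋯ = d_n − e_n. Then in ℚ(X)⟦Y⟧, the n-fold Hadamard product in Y satisfies ⊛_{i=1}^n (1 − X^{−e_i}Y)/((1−Y)(1−X^δ Y)) = ( Σ_{a ∈ Π(S_n)} α(a) · X^{δ·comaj(a)} Y^{des(a)} ) / ((1−Y)(1−X^δ Y)(1−X^{2δ}Y)⋯(1−X^{nδ}Y)), where for a = σ₁^{γ₁}⋯σ_n^{γ_n} ∈ Π(S_n) one sets α(a) = Π_{i : γ_i ≠ 0} (−X^{−d_{σ_i}}). -/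
open scoped Classical

noncomputable section

/-- The set `Π(S_n)` of all `2^n · n!` coloured permutations `σ₁^{γ₁}⋯σ_n^{γ_n}`
with `σ₁⋯σ_n` a permutation of `[n]` and `γ_i ∈ {0, σ_i}`. -/
def PiSn (n : ℕ) : Multiset CPerm :=
  (Finset.univ : Finset (Equiv.Perm (Fin n) × (Fin n → Bool))).val.map fun sg =>
    List.ofFn fun i : Fin n =>
      ((sg.1 i : ℕ) + 1, if sg.2 i then (sg.1 i : ℕ) + 1 else 0)

/-- `α(a) = Π_{i : γ_i ≠ 0} (−X^{−d_{σ_i}})`. -/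
def alphaD (d : ℕ → ℕ) (a : CPerm) : K :=
  (a.map fun p => if p.2 ≠ 0 then -XX ^ (-(d p.1 : ℤ)) else (1 : K)).prod

/-- The iterated (`n`-fold) Hadamard product of a list of power series
(the all-ones series `1/(1−Y)` is the Hadamard identity). -/
def hadamardProdList {R : Type*} [Semiring R] (l : List (PowerSeries R)) :
    PowerSeries R :=
  l.foldr hadamard (geom 1)

/-!
Compare coefficients of `Y^k`. The `k`-th coefficient of the `i`-th Hadamard factor is
`∑_{j ≤ k} X^{δj} - X^{-eᵢ} ∑_{j < k} X^{δj} = ∑_{(j, b)} βᵢ^b X^{δj}`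
with `βᵢ = -X^{-dᵢ}` (because `dᵢ - eᵢ = δ`), a sum over values `j ≤ k` carrying a colour flag `b`
that forces `j ≥ 1`.
Expanding the product over `i` gives a sum over maps assigning a flagged value to every symbol.
Sorting the symbols by value, ties broken by the colour order, turns such a map bijectively into
a coloured permutation `a ∈ Π(S_n)` together with a weakly increasing sequence of values that
increases strictly at the descents of `a` (Stanley's theory of `P`-partitions). Subtracting the
number of descents up to each position leaves an arbitrary weakly increasing sequence bounded by
`k - des a`, while the subtracted amounts add up to `comaj a`; those sequences are what the
coefficient of `Y^{k - des a}` in `1/((1-Y)(1-X^δY)⋯(1-X^{nδ}Y))` counts.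
-/

open Finset PowerSeries

section PowerSeriesCoefficients

variable {R : Type*}

theorem coeff_geom [Semiring R] (c : R) (k : ℕ) : coeff (R := R) k (geom c) = c ^ k :=
  coeff_mk _ _

theorem coeff_hadamardProdList [Semiring R] (l : List (PowerSeries R)) (k : ℕ) :
    coeff k (hadamardProdList l) = (l.map (coeff (R := R) k)).prod := by
  induction l with
  | nil => simp [hadamardProdList, coeff_geom]
  | cons A l ih =>
    rw [List.map_cons, List.prod_cons, ← ih]
    exact coeff_mk (R := R) k fun k => coeff k A * coeff k (hadamardProdList l)

variable [CommSemiring R]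

theorem coeff_geom_one_mul (P : PowerSeries R) (k : ℕ) :
    coeff k (geom 1 * P) = ∑ m ∈ range (k + 1), coeff m P := by
  rw [mul_comm, coeff_mul, Nat.sum_antidiagonal_eq_sum_range_succ_mk]
  simp [coeff_geom]

theorem rescale_geom (r c : R) : rescale r (geom c) = geom (r * c) := by
  ext k
  rw [coeff_rescale, coeff_geom, coeff_geom, mul_pow]

def boundedMonotone (N M : ℕ) : Finset (Fin N → ℕ) :=
  {l ∈ Fintype.piFinset fun _ => range (M + 1) | Monotone l}

theorem mem_boundedMonotone {N M : ℕ} {l : Fin N → ℕ} :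
    l ∈ boundedMonotone N M ↔ (∀ p, l p ≤ M) ∧ Monotone l := by
  simp [boundedMonotone]

theorem snoc_mem_boundedMonotone {N M m : ℕ} {l : Fin N → ℕ} (hm : m ≤ M)
    (hl : l ∈ boundedMonotone N m) :
    (Fin.snoc l m : Fin (N + 1) → ℕ) ∈ boundedMonotone (N + 1) M := by
  rw [mem_boundedMonotone] at hl ⊢
  refine ⟨Fin.lastCases (by simpa using hm) fun p => by simpa using (hl.1 p).trans hm, ?_⟩
  intro a b hab
  induction b using Fin.lastCases with
  | last => induction a using Fin.lastCases with
    | last => rfl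
    | cast p => simpa using hl.1 p
  | cast q => induction a using Fin.lastCases with
    | last => exact absurd hab (not_le.mpr (Fin.castSucc_lt_last q))
    | cast p => simpa using hl.2 (Fin.castSucc_le_castSucc_iff.mp hab)

theorem coeff_prod_geom_pow (c : R) (N M : ℕ) :
    coeff M (∏ i ∈ range (N + 1), geom (c ^ i)) =
      ∑ l ∈ boundedMonotone N M, c ^ ∑ p, l p := by
  induction N generalizing M with
  | zero =>
    have : boundedMonotone 0 M = {Fin.elim0} := by
      ext l
      simp [mem_boundedMonotone, Subsingleton.elim l Fin.elim0, Subsingleton.monotone]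
    simp [this, coeff_geom]
  | succ N ih =>
    have hshift : ∏ i ∈ range (N + 1), geom (c ^ (i + 1)) =
        rescale c (∏ i ∈ range (N + 1), geom (c ^ i)) := by
      simp only [map_prod, rescale_geom, pow_succ']
    rw [prod_range_succ', hshift, pow_zero, mul_comm, coeff_geom_one_mul]
    simp_rw [coeff_rescale, ih, mul_sum, ← pow_add]
    rw [sum_sigma']
    refine sum_bij' (fun x _ => Fin.snoc x.2 x.1) (fun l _ => ⟨l (Fin.last N), Fin.init l⟩)
      ?_ ?_ ?_ ?_ ?_
    · rintro ⟨m, l⟩ hx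
      simp only [mem_sigma, mem_range, Nat.lt_succ_iff] at hx
      exact snoc_mem_boundedMonotone hx.1 hx.2
    · intro l hl
      rw [mem_boundedMonotone] at hl
      simp only [mem_sigma, mem_range, Nat.lt_succ_iff, mem_boundedMonotone]
      exact ⟨hl.1 _, fun p => hl.2 (Fin.le_last _), hl.2.comp Fin.strictMono_castSucc.monotone⟩
    · rintro ⟨m, l⟩ _
      simp
    · intro l _
      simp
    · rintro ⟨m, l⟩ _
      simp [Fin.sum_univ_castSucc, add_comm]

theorem coeff_C_mul_X_pow_mul_prod_geom (a c : R) (m n k : ℕ) :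
    coeff k (C a * X ^ m * ∏ i ∈ range (n + 1), geom (c ^ i)) =
      if m ≤ k then a * ∑ l ∈ boundedMonotone n (k - m), c ^ ∑ p, l p else 0 := by
  rw [mul_right_comm, coeff_mul_X_pow', coeff_C_mul, coeff_prod_geom_pow]

end PowerSeriesCoefficients

section Letters

def letters (k : ℕ) : Finset (ℕ × Bool) :=
  {x ∈ range (k + 1) ×ˢ univ | x.2 → 1 ≤ x.1}

theorem mem_letters {k : ℕ} {x : ℕ × Bool} :
    x ∈ letters k ↔ x.1 ≤ k ∧ (x.2 → 1 ≤ x.1) := by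
  simp [letters]

variable {R : Type*} [CommRing R]

theorem coeff_geom_one_mul_geom (c : R) (k : ℕ) :
    coeff k (geom 1 * geom c) = ∑ j ∈ range (k + 1), c ^ j := by
  simp [coeff_geom_one_mul, coeff_geom]

theorem sum_letters (β c : R) (k : ℕ) :
    ∑ x ∈ letters k, (if x.2 then β else 1) * c ^ x.1 =
      ∑ j ∈ range (k + 1), c ^ j + ∑ j ∈ range k, β * c ^ (j + 1) := by
  have hshift : ∑ j ∈ range k, β * c ^ (j + 1) =
      ∑ j ∈ range (k + 1), if 1 ≤ j then β * c ^ j else 0 := by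
    simp [sum_range_succ']
  rw [hshift, ← sum_add_distrib, letters, sum_filter, sum_product]
  refine sum_congr rfl fun j _ => ?_
  by_cases hj : 1 ≤ j <;> simp [hj, add_comm]

theorem coeff_one_sub_C_mul_X_mul_geom_mul_geom {u β c : R} (h : β * c = -u) (k : ℕ) :
    coeff k ((1 - C u * X) * geom 1 * geom c) =
      ∑ x ∈ letters k, (if x.2 then β else 1) * c ^ x.1 := by
  have hsplit : (1 - C u * X) * geom 1 * geom c =
      geom 1 * geom c - C u * (geom 1 * geom c * X) := by
    ring
  rw [hsplit, map_sub, coeff_C_mul, sum_letters]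
  cases k with
  | zero => simp [coeff_geom_one_mul_geom]
  | succ k =>
    simp only [coeff_succ_mul_X, coeff_geom_one_mul_geom, mul_sum, sub_eq_add_neg,
      ← sum_neg_distrib]
    congr 1
    refine sum_congr rfl fun j _ => ?_
    rw [pow_succ', ← mul_assoc, h, neg_mul]

end Letters

section Adjacent

variable {α : Type*} [Preorder α] {n : ℕ} {f : Fin n → α}

theorem Fin.monotone_iff_adjacent_le :
    Monotone f ↔ ∀ p q : Fin n, (p : ℕ) + 1 = q → f p ≤ f q := by
  cases n with
  | zero => exact ⟨fun _ p => p.elim0, fun _ p => p.elim0⟩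
  | succ n =>
    rw [Fin.monotone_iff_le_succ]
    refine ⟨fun h p q hpq => ?_, fun h i => h _ _ (by simp)⟩
    obtain ⟨i, rfl⟩ : ∃ i : Fin n, p = i.castSucc := ⟨⟨p, by omega⟩, rfl⟩
    obtain rfl : q = i.succ := Fin.ext (by simp [← hpq])
    exact h i

theorem Fin.strictMono_iff_adjacent_lt :
    StrictMono f ↔ ∀ p q : Fin n, (p : ℕ) + 1 = q → f p < f q := by
  cases n with
  | zero => exact ⟨fun _ p => p.elim0, fun _ p => p.elim0⟩
  | succ n =>
    rw [Fin.strictMono_iff_lt_succ]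
    refine ⟨fun h p q hpq => ?_, fun h i => h _ _ (by simp)⟩
    obtain ⟨i, rfl⟩ : ∃ i : Fin n, p = i.castSucc := ⟨⟨p, by omega⟩, rfl⟩
    obtain rfl : q = i.succ := Fin.ext (by simp [← hpq])
    exact h i

end Adjacent

section Sorting

def colouredLetter (s : ℕ) (b : Bool) : ℕ × ℕ := (s + 1, if b then s + 1 else 0)

def colourRank (s : ℕ) (b : Bool) : ℤ := if b then -(s + 1 : ℤ) else s

theorem cLt_colouredLetter_iff (s t : ℕ) (b c : Bool) :
    cLt (colouredLetter s b) (colouredLetter t c) ↔ colourRank s b < colourRank t c := by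
  cases b <;> cases c <;> simp [cLt, colouredLetter, colourRank] <;> omega

theorem eq_of_colourRank_eq {s t : ℕ} {b c : Bool} (h : colourRank s b = colourRank t c) :
    s = t := by
  cases b <;> cases c <;> simp [colourRank] at h <;> omega

variable {n : ℕ}

def colouredWord (σ : Equiv.Perm (Fin n)) (g : Fin n → Bool) : CPerm :=
  List.ofFn fun p => colouredLetter (σ p) (g p)

theorem PiSn_eq_map_colouredWord (n : ℕ) :
    PiSn n = (univ : Finset (Equiv.Perm (Fin n) × (Fin n → Bool))).val.map
      fun sg => colouredWord sg.1 sg.2 :=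
  rfl

theorem alphaD_colouredWord (d : ℕ → ℕ) (σ : Equiv.Perm (Fin n)) (g : Fin n → Bool) :
    alphaD d (colouredWord σ g) = ∏ p, if g p then -XX ^ (-(d (σ p + 1) : ℤ)) else 1 := by
  simp only [alphaD, colouredWord, List.map_ofFn, List.prod_ofFn, Function.comp_def,
    colouredLetter]
  refine prod_congr rfl fun p _ => ?_
  cases g p <;> simp

/-- The fillings `u ≤ k` whose letters, sorted by value and then by the colour order, spell
the coloured word of `(σ, g)`. -/
def compatibleSeqs (σ : Equiv.Perm (Fin n)) (g : Fin n → Bool) (k : ℕ) :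
    Finset (Fin n → ℕ) :=
  {u ∈ Fintype.piFinset fun _ => range (k + 1) |
    StrictMono (fun p => toLex (u p, colourRank (σ p) (g p))) ∧ ∀ p, g p → 1 ≤ u p}

theorem mem_compatibleSeqs {σ : Equiv.Perm (Fin n)} {g : Fin n → Bool} {k : ℕ}
    {u : Fin n → ℕ} :
    u ∈ compatibleSeqs σ g k ↔ (∀ p, u p ≤ k) ∧
      StrictMono (fun p => toLex (u p, colourRank (σ p) (g p))) ∧ ∀ p, g p → 1 ≤ u p := by
  simp [compatibleSeqs]

def sortKey (f : Fin n → ℕ × Bool) (i : Fin n) : Lex (ℕ × ℤ) :=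
  toLex ((f i).1, colourRank i (f i).2)

theorem sortKey_injective (f : Fin n → ℕ × Bool) : Function.Injective (sortKey f) :=
  fun _ _ h => Fin.ext (eq_of_colourRank_eq (Prod.ext_iff.mp (toLex.injective h)).2)

theorem strictMono_sortKey_comp_sort (f : Fin n → ℕ × Bool) :
    StrictMono (sortKey f ∘ Tuple.sort (sortKey f)) :=
  (Tuple.monotone_sort _).strictMono_of_injective
    ((sortKey_injective f).comp (Equiv.injective _))

theorem sort_sortKey_eq {σ : Equiv.Perm (Fin n)} {g : Fin n → Bool} {u : Fin n → ℕ}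
    (h : StrictMono fun p => toLex (u p, colourRank (σ p) (g p))) :
    Tuple.sort (sortKey fun i => (u (σ.symm i), g (σ.symm i))) = σ := by
  refine (Tuple.eq_sort_iff.mpr ⟨?_, fun i j hij hk => ?_⟩).symm
  · simpa [Function.comp_def, sortKey] using h.monotone
  · exact absurd (σ.injective (sortKey_injective _ hk)) hij.ne

variable {R : Type*} [CommSemiring R]

theorem prod_sum_letters_eq_sum_compatibleSeqs (c : R) (β : Fin n → R) (k : ℕ) :
    ∏ i, ∑ x ∈ letters k, (if x.2 then β i else 1) * c ^ x.1 =
      ∑ sg : Equiv.Perm (Fin n) × (Fin n → Bool), (∏ p, if sg.2 p then β (sg.1 p) else 1) *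
        ∑ u ∈ compatibleSeqs sg.1 sg.2 k, c ^ ∑ p, u p := by
  simp_rw [prod_univ_sum, mul_sum]
  rw [sum_sigma']
  refine sum_bij'
    (fun f _ => ⟨(Tuple.sort (sortKey f), fun p => (f (Tuple.sort (sortKey f) p)).2),
      fun p => (f (Tuple.sort (sortKey f) p)).1⟩)
    (fun x _ i => (x.2 (x.1.1.symm i), x.1.2 (x.1.1.symm i))) ?_ ?_ ?_ ?_ ?_
  · intro f hf
    simp only [Fintype.mem_piFinset, mem_letters] at hf
    simp only [mem_sigma, mem_univ, true_and, mem_compatibleSeqs]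
    exact ⟨fun p => (hf _).1, strictMono_sortKey_comp_sort f, fun p => (hf _).2⟩
  · rintro ⟨⟨σ, g⟩, u⟩ hx
    simp only [mem_sigma, mem_univ, true_and, mem_compatibleSeqs] at hx
    simp only [Fintype.mem_piFinset, mem_letters]
    exact fun i => ⟨hx.1 _, hx.2.2 _⟩
  · intro f _
    simp
  · rintro ⟨⟨σ, g⟩, u⟩ hx
    simp only [mem_sigma, mem_univ, true_and, mem_compatibleSeqs] at hx
    have hσ := sort_sortKey_eq hx.2.1
    simp only [hσ, Equiv.symm_apply_apply]
  · intro f _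
    rw [← Equiv.prod_comp (Tuple.sort (sortKey f)), prod_mul_distrib, prod_pow_eq_pow_sum]

end Sorting

section Descents

def desUpTo (a : CPerm) (p : ℕ) : ℕ := #{i ∈ DesSet a | i ≤ p}

variable (a : CPerm)

theorem zero_mem_DesSet_iff : 0 ∈ DesSet a ↔ 0 < a.length ∧ (a.getD 0 (0, 0)).2 ≠ 0 := by
  simp [DesSet]

theorem succ_mem_DesSet_iff (p : ℕ) :
    p + 1 ∈ DesSet a ↔ p + 1 < a.length ∧ cLt (a.getD (p + 1) (0, 0)) (a.getD p (0, 0)) := by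
  simp [DesSet]

theorem des_le_length : des a ≤ a.length :=
  (card_filter_le _ _).trans (card_range _).le

theorem desUpTo_zero : desUpTo a 0 = if 0 ∈ DesSet a then 1 else 0 := by
  simp only [desUpTo, Nat.le_zero, filter_eq']
  split_ifs <;> rfl

theorem desUpTo_succ (p : ℕ) :
    desUpTo a (p + 1) = desUpTo a p + if p + 1 ∈ DesSet a then 1 else 0 := by
  simp only [desUpTo, Nat.le_succ_iff, filter_or]
  rw [card_union_of_disjoint (disjoint_filter.mpr fun i _ hi h => by omega), filter_eq']
  split_ifs <;> rfl

theorem desUpTo_le_des (p : ℕ) : desUpTo a p ≤ des a :=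
  card_filter_le _ _

theorem desUpTo_of_length_le {p : ℕ} (h : a.length ≤ p + 1) : desUpTo a p = des a := by
  rw [desUpTo, filter_true_of_mem, des]
  intro i hi
  have := mem_range.mp (mem_filter.mp hi).1
  omega

theorem sum_desUpTo : ∑ p ∈ range a.length, desUpTo a p = comaj a := by
  simp only [desUpTo, card_filter]
  rw [sum_comm, comaj]
  refine sum_congr rfl fun i hi => ?_
  have hfilter : {p ∈ range a.length | i ≤ p} = Ico i a.length := by
    ext p
    simp [and_comm]
  rw [← card_filter, hfilter, Nat.card_Ico]

theorem one_le_desUpTo {p : ℕ} (h : (a.getD p (0, 0)).2 ≠ 0) : 1 ≤ desUpTo a p := by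
  have hlen : p < a.length := by
    by_contra hp
    exact h (by rw [List.getD_eq_default _ _ (not_lt.mp hp)])
  induction p with
  | zero =>
    rw [desUpTo_zero, if_pos ((zero_mem_DesSet_iff a).mpr ⟨hlen, h⟩)]
  | succ p ih =>
    rw [desUpTo_succ]
    by_cases hp : (a.getD p (0, 0)).2 = 0
    · -- a coloured letter right after an uncoloured one is a descent
      have hdes : p + 1 ∈ DesSet a :=
        (succ_mem_DesSet_iff a p).mpr ⟨hlen, Or.inl (by omega)⟩
      simp [hdes]
    · exact (ih hp (by omega)).trans (Nat.le_add_right _ _)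

end Descents

section CompatibleSeqs

variable {n : ℕ} (σ : Equiv.Perm (Fin n)) (g : Fin n → Bool)

theorem length_colouredWord : (colouredWord σ g).length = n :=
  List.length_ofFn

theorem getD_colouredWord (p : Fin n) :
    (colouredWord σ g).getD p (0, 0) = colouredLetter (σ p) (g p) := by
  simp [colouredWord]

theorem desUpTo_colouredWord_of_val_eq_zero {p : Fin n} (hp : (p : ℕ) = 0) :
    desUpTo (colouredWord σ g) p = if g p then 1 else 0 := by
  have hletter := getD_colouredWord σ g p
  have hn : 0 < n := by omega
  rw [hp] at hletter
  rw [hp, desUpTo_zero]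
  simp only [zero_mem_DesSet_iff, hletter, length_colouredWord, hn, true_and]
  cases g p <;> simp [colouredLetter]

theorem desUpTo_colouredWord_of_adjacent {p q : Fin n} (h : (p : ℕ) + 1 = q) :
    desUpTo (colouredWord σ g) q = desUpTo (colouredWord σ g) p +
      if colourRank (σ q) (g q) < colourRank (σ p) (g p) then 1 else 0 := by
  have hletter := getD_colouredWord σ g q
  rw [← h] at hletter
  rw [← h, desUpTo_succ]
  simp only [succ_mem_DesSet_iff, hletter, getD_colouredWord, cLt_colouredLetter_iff,
    length_colouredWord, show (p : ℕ) + 1 < n from h ▸ q.isLt, true_and]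

theorem desUpTo_colouredWord_last :
    desUpTo (colouredWord σ g) (n - 1) = des (colouredWord σ g) :=
  desUpTo_of_length_le _ (by rw [length_colouredWord]; omega)

theorem strictMono_iff_monotone_sub_desUpTo {u : Fin n → ℕ} :
    StrictMono (fun p => toLex (u p, colourRank (σ p) (g p))) ↔
      Monotone fun p => (u p : ℤ) - desUpTo (colouredWord σ g) p := by
  rw [Fin.strictMono_iff_adjacent_lt, Fin.monotone_iff_adjacent_le]
  refine forall₂_congr fun p q => forall_congr' fun h => ?_
  have hne : colourRank (σ p) (g p) ≠ colourRank (σ q) (g q) := fun he =>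
    Fin.ne_of_val_ne (by omega : (p : ℕ) ≠ q) (σ.injective (Fin.ext (eq_of_colourRank_eq he)))
  rw [desUpTo_colouredWord_of_adjacent σ g h, Prod.Lex.toLex_lt_toLex]
  split_ifs <;> simp only at * <;> omega

theorem mem_compatibleSeqs_iff {k : ℕ} {u : Fin n → ℕ} :
    u ∈ compatibleSeqs σ g k ↔ (∀ p, u p ≤ k) ∧
      (∀ p : Fin n, desUpTo (colouredWord σ g) p ≤ u p) ∧
      Monotone fun p => u p - desUpTo (colouredWord σ g) p := by
  rw [mem_compatibleSeqs, strictMono_iff_monotone_sub_desUpTo]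
  refine and_congr_right fun _ =>
    ⟨fun ⟨hmono, hpos⟩ => ?_, fun ⟨hle, hmono⟩ => ⟨?_, fun p hp => ?_⟩⟩
  · have hle : ∀ p : Fin n, desUpTo (colouredWord σ g) p ≤ u p := by
      intro p
      have h0 := desUpTo_colouredWord_of_val_eq_zero σ g (p := ⟨0, p.pos⟩) rfl
      have h0p := hmono (show (⟨0, p.pos⟩ : Fin n) ≤ p from Nat.zero_le _)
      simp only at h0 h0p
      split_ifs at h0 with hg
      · have := hpos _ hg
        omega
      · omega
    refine ⟨hle, fun a b hab => ?_⟩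
    have := hmono hab
    dsimp only at this ⊢
    have := hle a
    have := hle b
    omega
  · intro a b hab
    have := hmono hab
    dsimp only at this ⊢
    have := hle a
    have := hle b
    omega
  · refine le_trans ?_ (hle p)
    apply one_le_desUpTo
    rw [getD_colouredWord, colouredLetter, if_pos hp]
    exact Nat.succ_ne_zero _

variable {R : Type*} [CommSemiring R]

theorem sum_desUpTo_colouredWord :
    ∑ p : Fin n, desUpTo (colouredWord σ g) p = comaj (colouredWord σ g) := by
  rw [Fin.sum_univ_eq_sum_range (desUpTo _), ← sum_desUpTo, length_colouredWord]

theorem sum_compatibleSeqs (c : R) (k : ℕ) :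
    ∑ u ∈ compatibleSeqs σ g k, c ^ ∑ p, u p =
      if des (colouredWord σ g) ≤ k then
        c ^ comaj (colouredWord σ g) *
          ∑ l ∈ boundedMonotone n (k - des (colouredWord σ g)), c ^ ∑ p, l p
      else 0 := by
  have hlast := desUpTo_colouredWord_last σ g
  split_ifs with hk
  · rw [mul_sum]
    symm
    refine sum_nbij' (fun l p => l p + desUpTo (colouredWord σ g) p)
      (fun u p => u p - desUpTo (colouredWord σ g) p) ?_ ?_ ?_ ?_ ?_
    · intro l hl
      rw [mem_boundedMonotone] at hl
      rw [mem_compatibleSeqs_iff]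
      refine ⟨fun p => ?_, fun p => Nat.le_add_left _ _, by simpa using hl.2⟩
      have := hl.1 p
      have := desUpTo_le_des (colouredWord σ g) p
      omega
    · intro u hu
      rw [mem_compatibleSeqs_iff] at hu
      obtain ⟨hbd, hle, hmono⟩ := hu
      rw [mem_boundedMonotone]
      refine ⟨fun p => ?_, hmono⟩
      have hp := p.isLt
      have := hmono (show p ≤ ⟨n - 1, by omega⟩ from Fin.mk_le_mk.mpr (by omega))
      have := hbd ⟨n - 1, by omega⟩
      simp only at *
      omega
    · intro l _
      simp
    · intro u hu
      rw [mem_compatibleSeqs_iff] at hu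
      funext p
      exact Nat.sub_add_cancel (hu.2.1 p)
    · intro l _
      rw [← pow_add, sum_add_distrib, sum_desUpTo_colouredWord, add_comm]
  · refine sum_eq_zero fun u hu => absurd ?_ hk
    rw [mem_compatibleSeqs_iff] at hu
    have hn : 0 < n := by
      have := des_le_length (colouredWord σ g)
      rw [length_colouredWord] at this
      omega
    have := hu.1 ⟨n - 1, by omega⟩
    have := hu.2.1 ⟨n - 1, by omega⟩
    simp only at *
    omega

end CompatibleSeqs

theorem hadamard_Mat_family_general (n : ℕ) (d e : ℕ → ℕ) (δ : ℤ)
    (hδ : ∀ i ∈ Finset.Icc 1 n, (d i : ℤ) - (e i : ℤ) = δ) :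
    hadamardProdList ((List.range n).map fun i =>
        (1 - PowerSeries.C (XX ^ (-(e (i + 1) : ℤ))) * PowerSeries.X) *
          geom (1 : K) * geom (XX ^ δ)) =
      ((PiSn n).map fun a =>
          PowerSeries.C (alphaD d a * XX ^ (δ * (comaj a : ℤ))) *
            PowerSeries.X ^ des a).sum *
        ∏ i ∈ Finset.range (n + 1), geom (XX ^ (δ * (i : ℤ))) := by
  have hX : (XX : K) ≠ 0 := RatFunc.X_ne_zero
  have hfactor : ∀ k, ∀ i ∈ range n,
      coeff k ((1 - C (XX ^ (-(e (i + 1) : ℤ))) * X) * geom (1 : K) * geom (XX ^ δ)) =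
        ∑ x ∈ letters k, (if x.2 then -XX ^ (-(d (i + 1) : ℤ)) else 1) * (XX ^ δ) ^ x.1 := by
    intro k i hi
    refine coeff_one_sub_C_mul_X_mul_geom_mul_geom ?_ k
    rw [neg_mul, ← zpow_add₀ hX, ← hδ (i + 1) (by simp at hi ⊢; omega)]
    ring_nf
  simp_rw [zpow_mul, zpow_natCast, Multiset.sum_map_mul_right.symm, PiSn_eq_map_colouredWord,
    Multiset.map_map]
  ext k
  rw [coeff_hadamardProdList, List.map_map, map_multiset_sum, Multiset.map_map, sum_map_val]
  rw [show ∀ F : ℕ → K, ((List.range n).map F).prod = ∏ i ∈ range n, F i from fun _ => rfl]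
  simp only [Function.comp_apply]
  rw [prod_congr rfl (hfactor k), ← Fin.prod_univ_eq_prod_range,
    prod_sum_letters_eq_sum_compatibleSeqs]
  refine sum_congr rfl fun sg _ => ?_
  rw [coeff_C_mul_X_pow_mul_prod_geom, sum_compatibleSeqs, alphaD_colouredWord]
  split_ifs <;> ring

/-- **Corollary.** For positive integers `d₁,…,d_n`, `e₁,…,e_n` with constant
difference `δ = dᵢ − eᵢ`:
`⊛ᵢ (1 − X^{−eᵢ}Y)/((1−Y)(1−X^δY)) =
 (Σ_{a ∈ Π(S_n)} α(a) X^{δ·comaj(a)} Y^{des(a)}) / ((1−Y)(1−X^δY)⋯(1−X^{nδ}Y))`. -/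
theorem hadamard_Mat_family (n : ℕ) (hn : 1 ≤ n) (d e : ℕ → ℕ) (δ : ℤ)
    (hd : ∀ i ∈ Finset.Icc 1 n, 0 < d i) (he : ∀ i ∈ Finset.Icc 1 n, 0 < e i)
    (hδ : ∀ i ∈ Finset.Icc 1 n, (d i : ℤ) - (e i : ℤ) = δ) :
    hadamardProdList ((List.range n).map fun i =>
        (1 - PowerSeries.C (XX ^ (-(e (i + 1) : ℤ))) * PowerSeries.X) *
          geom (1 : K) * geom (XX ^ δ)) =
      ((PiSn n).map fun a =>
          PowerSeries.C (alphaD d a * XX ^ (δ * (comaj a : ℤ))) *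
            PowerSeries.X ^ des a).sum *
        ∏ i ∈ Finset.range (n + 1), geom (XX ^ (δ * (i : ℤ))) :=
  hadamard_Mat_family_general n d e δ hδ
end
end
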